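/- Let M be a complex square matrix indexed by (m × k) × (m × k) for finite types m and k, and let N be the m × m matrix obtained by partially tracing out the second factor: N(i, j) = ∑_{a : k} M((i,a), (j,a)). Then ‖N‖₁ ≤ ‖M‖₁, i.e., the trace norm is non-increasing under partial trace. -/

import Mathlib

open scoped ComplexOrder

/-- The positive semidefinite square root of a positive semidefinite matrix
(removed from Mathlib; restored with its former definition). -/
noncomputable def Matrix.PosSemidef.sqrt {n : Type*} [Fintype n] [DecidableEq n]
    {A : Matrix n n ℂ} (hA : A.PosSemidef) : Matrix n n ℂ :=
  hA.1.eigenvectorUnitary.1 * Matrix.diagonal ((↑) ∘ (√·) ∘ hA.1.eigenvalues) *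
  (star hA.1.eigenvectorUnitary : Matrix n n ℂ)

/-- The trace norm of a complex square matrix `A`: the trace of `√(Aᴴ A)`
(equivalently, the sum of the singular values of `A`). -/
noncomputable def traceNorm {m : Type*} [Fintype m] [DecidableEq m] (A : Matrix m m ℂ) : ℝ :=
  ((Matrix.posSemidef_conjTranspose_mul_self A).sqrt).trace.re

/-!
Trace-norm duality: `‖A‖₁ = max {|Tr (B A)| : ‖B‖ ≤ 1}`, where `‖B‖` is the operator norm.
Choose `B` with `‖B‖ ≤ 1` and `Tr (B N) = ‖N‖₁` (the adjoint of the partial isometry in the polar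
decomposition of `N`). Then `B ⊗ 1` is again a contraction and `Tr ((B ⊗ 1) M) = Tr (B N)`, so
`‖N‖₁ = |Tr ((B ⊗ 1) M)| ≤ ‖M‖₁`.
-/

open scoped MatrixOrder Matrix.Norms.L2Operator Kronecker InnerProductSpace
open Matrix

lemma CStarRing.norm_conjStarAlgAut {S E : Type*} [NormedRing E] [StarRing E] [CStarRing E]
    [SMul S E] [IsScalarTower S E E] [SMulCommClass S E E] (u : unitary E) (x : E) :
    ‖Unitary.conjStarAlgAut S E u x‖ = ‖x‖ := by
  rw [Unitary.conjStarAlgAut_apply, norm_mul_mem_unitary _ (Unitary.star_mem u.2),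
    norm_coe_unitary_mul]

namespace Matrix

variable {n : Type*} [Fintype n] [DecidableEq n] {𝕜 : Type*} [RCLike 𝕜]

lemma trace_conjStarAlgAut {R : Type*} [CommRing R] [StarRing R] (U : unitaryGroup n R)
    (X : Matrix n n R) : (Unitary.conjStarAlgAut R _ U X).trace = X.trace := by
  rw [Unitary.conjStarAlgAut_apply, trace_mul_cycle, Unitary.coe_star_mul_self, one_mul]

lemma trace_eq_sum_inner_toEuclideanCLM {ι : Type*} [Fintype ι] (X : Matrix n n 𝕜)
    (b : OrthonormalBasis ι 𝕜 (EuclideanSpace 𝕜 n)) :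
    X.trace = ∑ i, ⟪b i, toEuclideanCLM (n := n) (𝕜 := 𝕜) X (b i)⟫_𝕜 := by
  have h := LinearMap.trace_eq_sum_inner (toEuclideanLin X) b
  rwa [toEuclideanLin_eq_toLin_orthonormal,
    LinearMap.trace_eq_matrix_trace 𝕜 (EuclideanSpace.basisFun n 𝕜).toBasis,
    LinearMap.toMatrix_toLin] at h

lemma IsHermitian.toEuclideanCLM_eigenvectorBasis {A : Matrix n n 𝕜} (hA : A.IsHermitian)
    (j : n) :
    toEuclideanCLM (n := n) (𝕜 := 𝕜) A (hA.eigenvectorBasis j)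
      = (hA.eigenvalues j : 𝕜) • hA.eigenvectorBasis j := by
  apply WithLp.ofLp_injective
  rw [ofLp_toEuclideanCLM, hA.mulVec_eigenvectorBasis, WithLp.ofLp_smul,
    RCLike.real_smul_eq_coe_smul (K := 𝕜)]

lemma norm_toEuclideanCLM_eigenvectorBasis (A : Matrix n n 𝕜) (j : n) :
    ‖toEuclideanCLM (n := n) (𝕜 := 𝕜) A
        ((isHermitian_conjTranspose_mul_self A).eigenvectorBasis j)‖
      = √((isHermitian_conjTranspose_mul_self A).eigenvalues j) := by
  set hH := isHermitian_conjTranspose_mul_self A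
  rw [← Real.sqrt_sq (norm_nonneg _), ← @inner_self_eq_norm_sq 𝕜,
    ← ContinuousLinearMap.adjoint_inner_right, ← ContinuousLinearMap.star_eq_adjoint,
    ← map_star, ← mul_apply_eq_comp, ← map_mul, star_eq_conjTranspose,
    hH.toEuclideanCLM_eigenvectorBasis, inner_smul_right, inner_self_eq_norm_sq_to_K,
    hH.eigenvectorBasis.orthonormal.1 j]
  simp

lemma l2_opNorm_le_one_iff_posSemidef {B : Matrix n n ℂ} :
    ‖B‖ ≤ 1 ↔ (1 - Bᴴ * B).PosSemidef := by
  rw [← le_iff, ← star_eq_conjTranspose,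
    ← CStarAlgebra.norm_le_one_iff_of_nonneg (star B * B), CStarRing.norm_star_mul_self,
    ← pow_two, sq_le_one_iff₀ (norm_nonneg B)]

lemma l2_opNorm_kronecker_one_le_one {k : Type*} [Fintype k] [DecidableEq k]
    {B : Matrix n n ℂ} (hB : ‖B‖ ≤ 1) : ‖B ⊗ₖ (1 : Matrix k k ℂ)‖ ≤ 1 := by
  rw [l2_opNorm_le_one_iff_posSemidef] at hB ⊢
  have h : 1 - (B ⊗ₖ 1)ᴴ * (B ⊗ₖ 1) = (1 - Bᴴ * B) ⊗ₖ (1 : Matrix k k ℂ) := by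
    rw [conjTranspose_kronecker, conjTranspose_one, ← mul_kronecker_mul, one_mul]
    ext ⟨i, a⟩ ⟨j, b⟩
    simp only [sub_apply, kroneckerMap_apply, one_apply]
    split_ifs <;> simp_all
  rw [h]
  exact hB.kronecker PosSemidef.one

variable {m k R : Type*} [Fintype m] [Fintype k]

def partialTrace [AddCommMonoid R] (M : Matrix (m × k) (m × k) R) : Matrix m m R :=
  of fun i j => ∑ a, M (i, a) (j, a)

lemma trace_kronecker_one_mul [NonAssocSemiring R] [DecidableEq k] (B : Matrix m m R)
    (M : Matrix (m × k) (m × k) R) :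
    ((B ⊗ₖ (1 : Matrix k k R)) * M).trace = (B * partialTrace M).trace := by
  simp only [trace, diag, mul_apply, kroneckerMap_apply, one_apply, partialTrace, of_apply,
    Fintype.sum_prod_type, Finset.mul_sum, mul_ite, mul_one, mul_zero, ite_mul, zero_mul,
    Finset.sum_ite_eq, Finset.mem_univ, if_true]
  exact Finset.sum_congr rfl fun i _ => Finset.sum_comm

end Matrix

section TraceNorm

variable {n : Type*} [Fintype n] [DecidableEq n]

lemma traceNorm_eq_sum_sqrt_eigenvalues (A : Matrix n n ℂ) :
    traceNorm A = ∑ j, √((isHermitian_conjTranspose_mul_self A).eigenvalues j) := by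
  rw [traceNorm, PosSemidef.sqrt, trace_mul_cycle, Unitary.coe_star_mul_self, one_mul,
    trace_diagonal]
  simp

lemma traceNorm_nonneg (A : Matrix n n ℂ) : 0 ≤ traceNorm A := by
  rw [traceNorm_eq_sum_sqrt_eigenvalues]
  positivity

theorem norm_trace_mul_le_l2_opNorm_mul_traceNorm (B A : Matrix n n ℂ) :
    ‖(B * A).trace‖ ≤ ‖B‖ * traceNorm A := by
  set u := (isHermitian_conjTranspose_mul_self A).eigenvectorBasis
  rw [traceNorm_eq_sum_sqrt_eigenvalues, trace_eq_sum_inner_toEuclideanCLM _ u, Finset.mul_sum]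
  refine (norm_sum_le _ _).trans (Finset.sum_le_sum fun j _ => ?_)
  rw [← norm_toEuclideanCLM_eigenvectorBasis, map_mul, mul_apply_eq_comp]
  refine (norm_inner_le_norm _ _).trans ?_
  rw [u.orthonormal.1 j, one_mul]
  exact ContinuousLinearMap.le_opNorm _ _

theorem exists_l2_opNorm_le_one_trace_mul_eq_traceNorm (A : Matrix n n ℂ) :
    ∃ B : Matrix n n ℂ, ‖B‖ ≤ 1 ∧ (B * A).trace = traceNorm A := by
  set hH := isHermitian_conjTranspose_mul_self A
  set Φ := Unitary.conjStarAlgAut ℂ (Matrix n n ℂ) hH.eigenvectorUnitary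
  set ev := hH.eigenvalues
  have hspec : Aᴴ * A = Φ (diagonal fun j => ((ev j : ℝ) : ℂ)) := hH.spectral_theorem
  -- the pseudo-inverse of `√(Aᴴ A)`: `(√0)⁻¹ = 0` on its kernel
  set G := Φ (diagonal fun j => (((√(ev j))⁻¹ : ℝ) : ℂ))
  have hG : star G = G := by
    rw [← map_star, star_eq_conjTranspose, diagonal_conjTranspose]
    congr; funext j; simp
  refine ⟨G * Aᴴ, ?_, ?_⟩
  · have hBB : G * Aᴴ * star (G * Aᴴ)
        = Φ (diagonal fun j => (((√(ev j))⁻¹ * ev j * (√(ev j))⁻¹ : ℝ) : ℂ)) := by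
      rw [star_mul, hG, star_eq_conjTranspose, conjTranspose_conjTranspose, mul_assoc,
        ← mul_assoc Aᴴ, hspec, ← map_mul, ← map_mul, diagonal_mul_diagonal,
        diagonal_mul_diagonal]
      congr 2; funext j; push_cast; ring
    rw [← sq_le_one_iff₀ (norm_nonneg _), sq, ← CStarRing.norm_self_mul_star, hBB,
      CStarRing.norm_conjStarAlgAut, l2_opNorm_diagonal]
    refine pi_norm_le_iff_of_nonneg zero_le_one |>.mpr fun j => ?_
    rw [Complex.norm_real, Real.norm_eq_abs, inv_mul_eq_div, Real.div_sqrt,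
      abs_of_nonneg (by positivity)]
    exact mul_inv_le_one
  · rw [mul_assoc, hspec, ← map_mul, diagonal_mul_diagonal, trace_conjStarAlgAut, trace_diagonal,
      traceNorm_eq_sum_sqrt_eigenvalues, Complex.ofReal_sum]
    refine Finset.sum_congr rfl fun j _ => ?_
    rw [← Complex.ofReal_mul, inv_mul_eq_div, Real.div_sqrt]

end TraceNorm

theorem traceNorm_partialTrace_le {m k : Type*}
    [Fintype m] [DecidableEq m] [Fintype k] [DecidableEq k]
    (M : Matrix (m × k) (m × k) ℂ) (N : Matrix m m ℂ)
    (hN : ∀ i j, N i j = ∑ a : k, M (i, a) (j, a)) :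
    traceNorm N ≤ traceNorm M := by
  obtain rfl : N = partialTrace M := ext hN
  obtain ⟨B, hB, hBN⟩ := exists_l2_opNorm_le_one_trace_mul_eq_traceNorm (partialTrace M)
  calc traceNorm (partialTrace M) = ‖(B * partialTrace M).trace‖ := by
        rw [hBN, Complex.norm_real, Real.norm_of_nonneg (traceNorm_nonneg _)]
    _ = ‖((B ⊗ₖ 1) * M).trace‖ := by rw [trace_kronecker_one_mul]
    _ ≤ ‖B ⊗ₖ (1 : Matrix k k ℂ)‖ * traceNorm M :=
        norm_trace_mul_le_l2_opNorm_mul_traceNorm _ _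
    _ ≤ traceNorm M :=
        mul_le_of_le_one_left (traceNorm_nonneg M) (l2_opNorm_kronecker_one_le_one hB)
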